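/- arXiv:math/0702025 — 7 statements merged into one kernel-verified Lean document; each statement's English description precedes it below -/
import Mathlib

section
/- Let D ⊆ E be a Lagrangian subspace and S ⊆ E an isotropic subspace. Then the stretching D^S := (D ∩ S^⊥) + S is again Lagrangian, i.e. ((D ∩ S^⊥) + S)^⊥ = (D ∩ S^⊥) + S. -/
/-! With nondegenerate symmetric `B` on a finite-dimensional space, `A ↦ A^⊥` is an
involutive order-reversing map of the subspace lattice, so it exchanges `⊔` and `⊓`.
For isotropic `S` this gives
`((D ∩ S^⊥) + S)^⊥ = (D^⊥ + S) ∩ S^⊥ = (D^⊥ ∩ S^⊥) + S`,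
the last step being the modular law (`S ≤ S^⊥`). Thus stretching commutes
with `⊥`. -/

/-- The orthogonal of a subspace `A` with respect to a bilinear form `B`:
`{e | ∀ a ∈ A, B e a = 0}`. -/
def bilinPerp {E : Type*} [AddCommGroup E] [Module ℝ E]
    (B : E →ₗ[ℝ] E →ₗ[ℝ] ℝ) (A : Submodule ℝ E) : Submodule ℝ E where
  carrier := {e | ∀ a ∈ A, B e a = 0}
  add_mem' := by
    intro x y hx hy a ha
    simp only [Set.mem_setOf_eq] at *
    rw [map_add, LinearMap.add_apply, hx a ha, hy a ha, add_zero]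
  zero_mem' := by
    intro a ha
    simp
  smul_mem' := by
    intro c x hx a ha
    simp only [Set.mem_setOf_eq] at *
    rw [map_smul, LinearMap.smul_apply, hx a ha, smul_zero]

section BilinPerp

variable {E : Type*} [AddCommGroup E] [Module ℝ E] (B : E →ₗ[ℝ] E →ₗ[ℝ] ℝ)

lemma bilinPerp_sup (A C : Submodule ℝ E) :
    bilinPerp B (A ⊔ C) = bilinPerp B A ⊓ bilinPerp B C := by
  ext x
  refine ⟨fun hx => ⟨fun a ha => hx a (Submodule.mem_sup_left ha),
    fun c hc => hx c (Submodule.mem_sup_right hc)⟩, ?_⟩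
  rintro ⟨hA, hC⟩ _ hy
  obtain ⟨a, ha, c, hc, rfl⟩ := Submodule.mem_sup.mp hy
  rw [map_add, hA a ha, hC c hc, add_zero]

variable {B}

lemma bilinPerp_eq_orthogonal (hsymm : ∀ x y : E, B x y = B y x) (A : Submodule ℝ E) :
    bilinPerp B A = LinearMap.BilinForm.orthogonal B A := by
  ext x
  exact forall₂_congr fun a _ => by rw [hsymm]

lemma bilinPerp_bilinPerp [FiniteDimensional ℝ E] (hsymm : ∀ x y : E, B x y = B y x)
    (hnondeg : ∀ x : E, (∀ y : E, B x y = 0) → x = 0) (A : Submodule ℝ E) :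
    bilinPerp B (bilinPerp B A) = A := by
  have hrefl : LinearMap.IsRefl B := fun x y h => hsymm x y ▸ h
  rw [bilinPerp_eq_orthogonal hsymm, bilinPerp_eq_orthogonal hsymm]
  exact LinearMap.BilinForm.orthogonal_orthogonal
    (hrefl.nondegenerate_iff_separatingLeft.mpr hnondeg) hrefl A

lemma bilinPerp_inf [FiniteDimensional ℝ E] (hsymm : ∀ x y : E, B x y = B y x)
    (hnondeg : ∀ x : E, (∀ y : E, B x y = 0) → x = 0) (A C : Submodule ℝ E) :
    bilinPerp B (A ⊓ C) = bilinPerp B A ⊔ bilinPerp B C := by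
  conv_lhs => rw [← bilinPerp_bilinPerp hsymm hnondeg A, ← bilinPerp_bilinPerp hsymm hnondeg C,
    ← bilinPerp_sup]
  exact bilinPerp_bilinPerp hsymm hnondeg _

lemma bilinPerp_stretching [FiniteDimensional ℝ E] (hsymm : ∀ x y : E, B x y = B y x)
    (hnondeg : ∀ x : E, (∀ y : E, B x y = 0) → x = 0) (D S : Submodule ℝ E)
    (hS : S ≤ bilinPerp B S) :
    bilinPerp B ((D ⊓ bilinPerp B S) ⊔ S) = (bilinPerp B D ⊓ bilinPerp B S) ⊔ S := by
  rw [bilinPerp_sup, bilinPerp_inf hsymm hnondeg, bilinPerp_bilinPerp hsymm hnondeg, sup_comm,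
    sup_inf_assoc_of_le _ hS, sup_comm]

end BilinPerp

/-- Let `E` be a finite-dimensional real vector space with a nondegenerate
symmetric bilinear form. If `D ⊆ E` is Lagrangian (`D = D^⊥`) and `S ⊆ E` is isotropic
(`S ⊆ S^⊥`), then the stretching `D^S := (D ∩ S^⊥) + S` is again Lagrangian:
`((D ∩ S^⊥) + S)^⊥ = (D ∩ S^⊥) + S`. -/
theorem stretching_is_lagrangian
    {E : Type*} [AddCommGroup E] [Module ℝ E] [FiniteDimensional ℝ E]
    (B : E →ₗ[ℝ] E →ₗ[ℝ] ℝ)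
    (hsymm : ∀ x y : E, B x y = B y x)
    (hnondeg : ∀ x : E, (∀ y : E, B x y = 0) → x = 0)
    (D S : Submodule ℝ E)
    (hD : bilinPerp B D = D)
    (hS : S ≤ bilinPerp B S) :
    bilinPerp B ((D ⊓ bilinPerp B S) ⊔ S) = (D ⊓ bilinPerp B S) ⊔ S := by
  rw [bilinPerp_stretching hsymm hnondeg D S hS, hD]
end

section
/- The bilinear form on W° defined by (ξ,η) ↦ ξ(Πη) is nondegenerate if and only if Π(W°) ∩ W = {0} and Π(W°) + W = V (that is, if and only if Π(W°) and W are complementary subspaces of V). -/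
/-- Let `V` be a finite-dimensional real vector space, `Pi : V* → V` a skew
linear map, and `W ⊆ V` a subspace with annihilator `W°`. The bilinear form on `W°`
defined by `(ξ, η) ↦ ξ(Pi η)` is nondegenerate if and only if `Pi(W°) ∩ W = {0}` and
`Pi(W°) + W = V`, i.e. iff `Pi(W°)` and `W` are complementary subspaces of `V`. -/
theorem annihilator_form_nondegenerate_iff_complementary
    {V : Type*} [AddCommGroup V] [Module ℝ V] [FiniteDimensional ℝ V]
    (Pi : Module.Dual ℝ V →ₗ[ℝ] V)
    (hskew : ∀ ξ η : Module.Dual ℝ V, ξ (Pi η) = - η (Pi ξ))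
    (W : Submodule ℝ V) :
    (∀ ξ ∈ W.dualAnnihilator, (∀ η ∈ W.dualAnnihilator, ξ (Pi η) = 0) → ξ = 0) ↔
      (W.dualAnnihilator.map Pi ⊓ W = ⊥ ∧ W.dualAnnihilator.map Pi ⊔ W = ⊤) := by
  constructor
  · intro hd
    constructor
    · rw [Submodule.eq_bot_iff]
      rintro v ⟨hv1, hv2⟩
      obtain ⟨η, hη, rfl⟩ := hv1
      have : η = 0 := by
        apply hd η hη
        intro ξ hξ
        have h1 : ξ (Pi η) = 0 := (Submodule.mem_dualAnnihilator ξ).mp hξ _ hv2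
        rw [hskew η ξ, h1, neg_zero]
      rw [this, map_zero]
    · rw [← Subspace.dualAnnihilator_inj, Submodule.dualAnnihilator_top,
        Submodule.eq_bot_iff]
      intro ξ hξ
      have hξW : ξ ∈ W.dualAnnihilator :=
        Subspace.dualAnnihilator_le_dualAnnihilator_iff.mpr le_sup_right hξ
      apply hd ξ hξW
      intro η hη
      exact (Submodule.mem_dualAnnihilator ξ).mp hξ _
        (le_sup_left (α := Submodule ℝ V) (Submodule.mem_map_of_mem hη))
  · rintro ⟨-, hsup⟩ ξ hξ hξ0
    ext v
    have hv : v ∈ W.dualAnnihilator.map Pi ⊔ W := hsup ▸ Submodule.mem_top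
    obtain ⟨a, ha, b, hb, rfl⟩ := Submodule.mem_sup.mp hv
    obtain ⟨η, hη, rfl⟩ := ha
    simp [hξ0 η hη, (Submodule.mem_dualAnnihilator ξ).mp hξ b hb]
end

section
/- The Dirac bracket satisfies the Jacobi identity: {f, {g,h}_Dirac}_Dirac + {g, {h,f}_Dirac}_Dirac + {h, {f,g}_Dirac}_Dirac = 0 for all f, g, h ∈ A. (Hence the Dirac bracket is again a Poisson bracket on A.) -/
/-- The Dirac bracket associated to a Poisson bracket `P`, second class constraints
`φ : Fin m → A` and the inverse `Cinv` of the matrix `C a b = P (φ a) (φ b)`: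
`{f,g}_Dirac := {f,g} − Σ_{a,b} {f, φ a} ⬝ Cinv a b ⬝ {φ b, g}`. -/
noncomputable def diracBracket {A : Type*} [CommRing A] [Algebra ℝ A] {m : ℕ}
    (P : A →ₗ[ℝ] A →ₗ[ℝ] A) (φ : Fin m → A) (Cinv : Matrix (Fin m) (Fin m) A)
    (f g : A) : A :=
  P f g - ∑ a : Fin m, ∑ b : Fin m, P f (φ a) * Cinv a b * P (φ b) g

namespace DiracJacobiAux

variable {A : Type*} [CommRing A] [Algebra ℝ A]
variable (P : A →ₗ[ℝ] A →ₗ[ℝ] A) {m : ℕ} (φ : Fin m → A) (Cinv : Matrix (Fin m) (Fin m) A)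

lemma P_one (hleibniz : ∀ f g h : A, P f (g * h) = P f g * h + g * P f h) (x : A) :
    P x 1 = 0 := by
  have h := hleibniz x 1 1
  simp only [mul_one, one_mul] at h
  linear_combination -h

lemma P_delta (hleibniz : ∀ f g h : A, P f (g * h) = P f g * h + g * P f h) (x : A)
    (p : Prop) [Decidable p] : P x (if p then (1:A) else 0) = 0 := by
  split_ifs
  · exact P_one P hleibniz x
  · exact map_zero (P x)

lemma cinv_anti (hanti : ∀ f g : A, P f g = - P g f)
    (hCinv₁ : ∀ a c : Fin m, (∑ b : Fin m, P (φ a) (φ b) * Cinv b c) = if a = c then 1 else 0)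
    (a b : Fin m) : Cinv a b = -Cinv b a := by
  have key : ∀ u v : Fin m, (∑ c : Fin m, -Cinv c u * P (φ c) (φ v)) = if u = v then 1 else 0 := by
    intro u v
    calc (∑ c : Fin m, -Cinv c u * P (φ c) (φ v))
        = ∑ c : Fin m, P (φ v) (φ c) * Cinv c u := by
          refine Finset.sum_congr rfl fun c _ => ?_
          rw [hanti (φ c) (φ v)]; ring
      _ = if v = u then 1 else 0 := hCinv₁ v u
      _ = if u = v then 1 else 0 := by simp [eq_comm]
  calc Cinv a b
      = ∑ d : Fin m, (if a = d then (1:A) else 0) * Cinv d b := by simp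
    _ = ∑ d : Fin m, (∑ c : Fin m, -Cinv c a * P (φ c) (φ d)) * Cinv d b := by
        refine Finset.sum_congr rfl fun d _ => ?_
        rw [key a d]
    _ = ∑ c : Fin m, -Cinv c a * ∑ d : Fin m, P (φ c) (φ d) * Cinv d b := by
        simp only [Finset.sum_mul]
        rw [Finset.sum_comm]
        refine Finset.sum_congr rfl fun c _ => ?_
        rw [Finset.mul_sum]
        exact Finset.sum_congr rfl fun d _ => by ring
    _ = ∑ c : Fin m, -Cinv c a * (if c = b then 1 else 0) := by
        refine Finset.sum_congr rfl fun c _ => ?_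
        rw [hCinv₁ c b]
    _ = -Cinv b a := by simp

lemma dCinv (hleibniz : ∀ f g h : A, P f (g * h) = P f g * h + g * P f h)
    (hCinv₁ : ∀ a c : Fin m, (∑ b : Fin m, P (φ a) (φ b) * Cinv b c) = if a = c then 1 else 0)
    (hCinv₂ : ∀ a c : Fin m, (∑ b : Fin m, Cinv a b * P (φ b) (φ c)) = if a = c then 1 else 0)
    (x : A) (a b : Fin m) :
    P x (Cinv a b) = -∑ c : Fin m, ∑ d : Fin m, Cinv a c * P x (P (φ c) (φ d)) * Cinv d b := by
  have h0 : ∀ e : Fin m, (∑ c : Fin m, P x (Cinv a c) * P (φ c) (φ e))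
      = -∑ c : Fin m, Cinv a c * P x (P (φ c) (φ e)) := by
    intro e
    have h1 := congrArg (P x) (hCinv₂ a e)
    rw [map_sum, P_delta P hleibniz] at h1
    rw [Finset.sum_congr rfl fun c _ => hleibniz x (Cinv a c) (P (φ c) (φ e)),
      Finset.sum_add_distrib] at h1
    linear_combination h1
  calc P x (Cinv a b)
      = ∑ c : Fin m, P x (Cinv a c) * (if c = b then 1 else 0) := by simp
    _ = ∑ c : Fin m, P x (Cinv a c) * (∑ d : Fin m, P (φ c) (φ d) * Cinv d b) := by
        refine Finset.sum_congr rfl fun c _ => ?_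
        rw [hCinv₁ c b]
    _ = ∑ d : Fin m, (∑ c : Fin m, P x (Cinv a c) * P (φ c) (φ d)) * Cinv d b := by
        simp only [Finset.mul_sum]
        rw [Finset.sum_comm]
        refine Finset.sum_congr rfl fun d _ => ?_
        rw [Finset.sum_mul]
        exact Finset.sum_congr rfl fun c _ => by ring
    _ = ∑ d : Fin m, (-∑ c : Fin m, Cinv a c * P x (P (φ c) (φ d))) * Cinv d b := by
        refine Finset.sum_congr rfl fun d _ => ?_
        rw [h0 d]
    _ = -∑ c : Fin m, ∑ d : Fin m, Cinv a c * P x (P (φ c) (φ d)) * Cinv d b := by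
        simp only [neg_mul, Finset.sum_mul, Finset.sum_neg_distrib]
        rw [Finset.sum_comm]

lemma leib3 (hleibniz : ∀ f g h : A, P f (g * h) = P f g * h + g * P f h) (x p q r : A) :
    P x (p * q * r) = P x p * q * r + p * P x q * r + p * q * P x r := by
  rw [hleibniz x (p*q) r, hleibniz x p q]; ring


def E2 (f g h : A) : A := ∑ a : Fin m, ∑ b : Fin m, P f (P g (φ a)) * Cinv a b * P (φ b) h
def E3 (f g h : A) : A := ∑ a : Fin m, ∑ b : Fin m, ∑ c : Fin m, ∑ d : Fin m,
  P g (φ a) * Cinv a c * P f (P (φ c) (φ d)) * Cinv d b * P (φ b) h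
def E4 (f g h : A) : A := ∑ a : Fin m, ∑ b : Fin m, P g (φ a) * Cinv a b * P f (P (φ b) h)
def E5 (f g h : A) : A := ∑ a : Fin m, ∑ b : Fin m, P f (φ a) * Cinv a b * P (φ b) (P g h)
def E6 (f g h : A) : A := ∑ a : Fin m, ∑ b : Fin m, ∑ c : Fin m, ∑ d : Fin m,
  P f (φ a) * Cinv a b * P (φ b) (P g (φ c)) * Cinv c d * P (φ d) h
def E7 (f g h : A) : A := ∑ a : Fin m, ∑ b : Fin m, ∑ c : Fin m, ∑ d : Fin m, ∑ e : Fin m, ∑ k : Fin m,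
  P f (φ a) * Cinv a b * P g (φ c) * Cinv c e * P (φ b) (P (φ e) (φ k)) * Cinv k d * P (φ d) h
def E8 (f g h : A) : A := ∑ a : Fin m, ∑ b : Fin m, ∑ c : Fin m, ∑ d : Fin m,
  P f (φ a) * Cinv a b * P g (φ c) * Cinv c d * P (φ b) (P (φ d) h)

lemma PS (hleibniz : ∀ f g h : A, P f (g * h) = P f g * h + g * P f h)
    (hCinv₁ : ∀ a c : Fin m, (∑ b : Fin m, P (φ a) (φ b) * Cinv b c) = if a = c then 1 else 0)
    (hCinv₂ : ∀ a c : Fin m, (∑ b : Fin m, Cinv a b * P (φ b) (φ c)) = if a = c then 1 else 0)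
    (x y z : A) :
    P x (∑ a : Fin m, ∑ b : Fin m, P y (φ a) * Cinv a b * P (φ b) z)
    = (∑ a : Fin m, ∑ b : Fin m, P x (P y (φ a)) * Cinv a b * P (φ b) z)
      - (∑ a : Fin m, ∑ b : Fin m, ∑ c : Fin m, ∑ d : Fin m,
          P y (φ a) * Cinv a c * P x (P (φ c) (φ d)) * Cinv d b * P (φ b) z)
      + (∑ a : Fin m, ∑ b : Fin m, P y (φ a) * Cinv a b * P x (P (φ b) z)) := by
  rw [map_sum]
  have hpt : ∀ a b : Fin m, P x (P y (φ a) * Cinv a b * P (φ b) z)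
      = P x (P y (φ a)) * Cinv a b * P (φ b) z
        - (∑ c : Fin m, ∑ d : Fin m,
            P y (φ a) * Cinv a c * P x (P (φ c) (φ d)) * Cinv d b * P (φ b) z)
        + P y (φ a) * Cinv a b * P x (P (φ b) z) := by
    intro a b
    rw [leib3 P hleibniz, dCinv P φ Cinv hleibniz hCinv₁ hCinv₂ x a b]
    have hmid : P y (φ a) * (-∑ c : Fin m, ∑ d : Fin m,
          Cinv a c * P x (P (φ c) (φ d)) * Cinv d b) * P (φ b) z
        = -(∑ c : Fin m, ∑ d : Fin m,
            P y (φ a) * Cinv a c * P x (P (φ c) (φ d)) * Cinv d b * P (φ b) z) := by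
      simp only [mul_neg, neg_mul, Finset.mul_sum, Finset.sum_mul, neg_inj]
      exact Finset.sum_congr rfl fun c _ => Finset.sum_congr rfl fun d _ => by ring
    rw [hmid]; ring
  rw [Finset.sum_congr rfl fun a _ => map_sum (P x) _ _]
  rw [Finset.sum_congr rfl fun a _ => Finset.sum_congr rfl fun b _ => hpt a b]
  simp only [Finset.sum_add_distrib, Finset.sum_sub_distrib]


lemma expandD (hleibniz : ∀ f g h : A, P f (g * h) = P f g * h + g * P f h)
    (hCinv₁ : ∀ a c : Fin m, (∑ b : Fin m, P (φ a) (φ b) * Cinv b c) = if a = c then 1 else 0)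
    (hCinv₂ : ∀ a c : Fin m, (∑ b : Fin m, Cinv a b * P (φ b) (φ c)) = if a = c then 1 else 0)
    (f g h : A) :
    diracBracket P φ Cinv f (diracBracket P φ Cinv g h)
    = P f (P g h) - E2 P φ Cinv f g h + E3 P φ Cinv f g h - E4 P φ Cinv f g h
      - E5 P φ Cinv f g h + E6 P φ Cinv f g h - E7 P φ Cinv f g h + E8 P φ Cinv f g h := by
  simp only [diracBracket, E2, E3, E4, E5, E6, E7, E8]
  rw [map_sub (P f), PS P φ Cinv hleibniz hCinv₁ hCinv₂ f g h]
  have hpt : ∀ a b : Fin m,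
      P f (φ a) * Cinv a b *
        P (φ b) (P g h - ∑ c : Fin m, ∑ d : Fin m, P g (φ c) * Cinv c d * P (φ d) h)
      = P f (φ a) * Cinv a b * P (φ b) (P g h)
        - (∑ c : Fin m, ∑ d : Fin m,
            P f (φ a) * Cinv a b * P (φ b) (P g (φ c)) * Cinv c d * P (φ d) h)
        + (∑ c : Fin m, ∑ d : Fin m, ∑ e : Fin m, ∑ k : Fin m,
            P f (φ a) * Cinv a b * P g (φ c) * Cinv c e * P (φ b) (P (φ e) (φ k)) * Cinv k d
              * P (φ d) h)
        - (∑ c : Fin m, ∑ d : Fin m,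
            P f (φ a) * Cinv a b * P g (φ c) * Cinv c d * P (φ b) (P (φ d) h)) := by
    intro a b
    rw [map_sub (P (φ b)), PS P φ Cinv hleibniz hCinv₁ hCinv₂ (φ b) g h]
    have d1 : P f (φ a) * Cinv a b *
        (∑ c : Fin m, ∑ d : Fin m, P (φ b) (P g (φ c)) * Cinv c d * P (φ d) h)
        = ∑ c : Fin m, ∑ d : Fin m,
            P f (φ a) * Cinv a b * P (φ b) (P g (φ c)) * Cinv c d * P (φ d) h := by
      simp only [Finset.mul_sum]
      exact Finset.sum_congr rfl fun c _ => Finset.sum_congr rfl fun d _ => by ring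
    have d2 : P f (φ a) * Cinv a b *
        (∑ c : Fin m, ∑ d : Fin m, ∑ e : Fin m, ∑ k : Fin m,
          P g (φ c) * Cinv c e * P (φ b) (P (φ e) (φ k)) * Cinv k d * P (φ d) h)
        = ∑ c : Fin m, ∑ d : Fin m, ∑ e : Fin m, ∑ k : Fin m,
            P f (φ a) * Cinv a b * P g (φ c) * Cinv c e * P (φ b) (P (φ e) (φ k)) * Cinv k d
              * P (φ d) h := by
      simp only [Finset.mul_sum]
      exact Finset.sum_congr rfl fun c _ => Finset.sum_congr rfl fun d _ =>
        Finset.sum_congr rfl fun e _ => Finset.sum_congr rfl fun k _ => by ring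
    have d3 : P f (φ a) * Cinv a b *
        (∑ c : Fin m, ∑ d : Fin m, P g (φ c) * Cinv c d * P (φ b) (P (φ d) h))
        = ∑ c : Fin m, ∑ d : Fin m,
            P f (φ a) * Cinv a b * P g (φ c) * Cinv c d * P (φ b) (P (φ d) h) := by
      simp only [Finset.mul_sum]
      exact Finset.sum_congr rfl fun c _ => Finset.sum_congr rfl fun d _ => by ring
    linear_combination -d1 + d2 - d3
  rw [Finset.sum_congr rfl fun a _ => Finset.sum_congr rfl fun b _ => hpt a b]
  simp only [Finset.sum_add_distrib, Finset.sum_sub_distrib]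
  ring


lemma sum4_reindex (F G : Fin m → Fin m → Fin m → Fin m → A)
    (σ τ : (Fin m × Fin m × Fin m × Fin m) → (Fin m × Fin m × Fin m × Fin m))
    (h1 : ∀ p, τ (σ p) = p) (h2 : ∀ p, σ (τ p) = p)
    (h : ∀ p : Fin m × Fin m × Fin m × Fin m,
      F p.1 p.2.1 p.2.2.1 p.2.2.2 = G (σ p).1 (σ p).2.1 (σ p).2.2.1 (σ p).2.2.2) :
    (∑ a : Fin m, ∑ b : Fin m, ∑ c : Fin m, ∑ d : Fin m, F a b c d)
    = ∑ a : Fin m, ∑ b : Fin m, ∑ c : Fin m, ∑ d : Fin m, G a b c d := by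
  have e1 : (∑ p : Fin m × Fin m × Fin m × Fin m, F p.1 p.2.1 p.2.2.1 p.2.2.2)
      = ∑ a : Fin m, ∑ b : Fin m, ∑ c : Fin m, ∑ d : Fin m, F a b c d := by
    simp only [Fintype.sum_prod_type]
  have e2 : (∑ p : Fin m × Fin m × Fin m × Fin m, G p.1 p.2.1 p.2.2.1 p.2.2.2)
      = ∑ a : Fin m, ∑ b : Fin m, ∑ c : Fin m, ∑ d : Fin m, G a b c d := by
    simp only [Fintype.sum_prod_type]
  rw [← e1, ← e2]
  exact Fintype.sum_equiv ⟨σ, τ, h1, h2⟩ _ _ h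


lemma group2 (hanti : ∀ f g : A, P f g = - P g f)
    (hjacobi : ∀ f g h : A, P f (P g h) + P g (P h f) + P h (P f g) = 0)
    (hCinv₁ : ∀ a c : Fin m, (∑ b : Fin m, P (φ a) (φ b) * Cinv b c) = if a = c then 1 else 0)
    (f g h : A) :
    E2 P φ Cinv f g h + E4 P φ Cinv f g h + E5 P φ Cinv f g h
      + (E2 P φ Cinv g h f + E4 P φ Cinv g h f + E5 P φ Cinv g h f)
      + (E2 P φ Cinv h f g + E4 P φ Cinv h f g + E5 P φ Cinv h f g) = 0 := by
  have c2 : ∀ x y z : A, E2 P φ Cinv x y z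
      = ∑ a : Fin m, ∑ b : Fin m, P z (φ a) * Cinv a b * P x (P y (φ b)) := by
    intro x y z
    rw [E2, Finset.sum_comm]
    refine Finset.sum_congr rfl fun a _ => Finset.sum_congr rfl fun b _ => ?_
    rw [cinv_anti P φ Cinv hanti hCinv₁ b a, hanti (φ a) z]; ring
  have c5 : ∀ x y z : A, E5 P φ Cinv x y z
      = -(∑ a : Fin m, ∑ b : Fin m, P x (φ a) * Cinv a b * P y (P z (φ b)))
        - ∑ a : Fin m, ∑ b : Fin m, P x (φ a) * Cinv a b * P z (P (φ b) y) := by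
    intro x y z
    rw [E5]
    rw [Finset.sum_congr rfl fun a _ => Finset.sum_congr rfl fun b (_ : b ∈ Finset.univ) =>
      show P x (φ a) * Cinv a b * P (φ b) (P y z)
        = -(P x (φ a) * Cinv a b * P y (P z (φ b)))
          - P x (φ a) * Cinv a b * P z (P (φ b) y) from by
        linear_combination (P x (φ a) * Cinv a b) * hjacobi (φ b) y z]
    simp only [Finset.sum_sub_distrib, Finset.sum_neg_distrib]
  rw [c2 f g h, c2 g h f, c2 h f g, c5 f g h, c5 g h f, c5 h f g, E4, E4, E4]
  ring


lemma group3 (hanti : ∀ f g : A, P f g = - P g f)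
    (hjacobi : ∀ f g h : A, P f (P g h) + P g (P h f) + P h (P f g) = 0)
    (hCinv₁ : ∀ a c : Fin m, (∑ b : Fin m, P (φ a) (φ b) * Cinv b c) = if a = c then 1 else 0)
    (x y z : A) :
    E3 P φ Cinv x y z + E6 P φ Cinv z x y + E8 P φ Cinv y z x = 0 := by
  have h6 : E6 P φ Cinv z x y
      = -(∑ a : Fin m, ∑ b : Fin m, ∑ c : Fin m, ∑ d : Fin m,
          P z (φ a) * Cinv a b * P x (P (φ c) (φ b)) * Cinv c d * P (φ d) y)
        - ∑ a : Fin m, ∑ b : Fin m, ∑ c : Fin m, ∑ d : Fin m,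
          P z (φ a) * Cinv a b * P (φ c) (P (φ b) x) * Cinv c d * P (φ d) y := by
    rw [E6]
    rw [Finset.sum_congr rfl fun a _ => Finset.sum_congr rfl fun b _ =>
      Finset.sum_congr rfl fun c _ => Finset.sum_congr rfl fun d (_ : d ∈ Finset.univ) =>
      show P z (φ a) * Cinv a b * P (φ b) (P x (φ c)) * Cinv c d * P (φ d) y
        = -(P z (φ a) * Cinv a b * P x (P (φ c) (φ b)) * Cinv c d * P (φ d) y)
          - P z (φ a) * Cinv a b * P (φ c) (P (φ b) x) * Cinv c d * P (φ d) y from by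
        linear_combination (P z (φ a) * Cinv a b * (Cinv c d * P (φ d) y)) *
          hjacobi (φ b) x (φ c)]
    simp only [Finset.sum_sub_distrib, Finset.sum_neg_distrib]
  have h3 : E3 P φ Cinv x y z
      = ∑ a : Fin m, ∑ b : Fin m, ∑ c : Fin m, ∑ d : Fin m,
          P z (φ a) * Cinv a b * P x (P (φ c) (φ b)) * Cinv c d * P (φ d) y := by
    rw [E3]
    refine sum4_reindex
      (fun a b c d => P y (φ a) * Cinv a c * P x (P (φ c) (φ d)) * Cinv d b * P (φ b) z)
      (fun a b c d => P z (φ a) * Cinv a b * P x (P (φ c) (φ b)) * Cinv c d * P (φ d) y)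
      (fun p => (p.2.1, p.2.2.2, p.2.2.1, p.1))
      (fun p => (p.2.2.2, p.1, p.2.2.1, p.2.1))
      (fun p => rfl) (fun p => rfl) ?_
    rintro ⟨a, b, c, d⟩
    show P y (φ a) * Cinv a c * P x (P (φ c) (φ d)) * Cinv d b * P (φ b) z
      = P z (φ b) * Cinv b d * P x (P (φ c) (φ d)) * Cinv c a * P (φ a) y
    rw [hanti y (φ a), cinv_anti P φ Cinv hanti hCinv₁ a c,
      cinv_anti P φ Cinv hanti hCinv₁ d b, hanti (φ b) z]
    ring
  have h8 : E8 P φ Cinv y z x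
      = ∑ a : Fin m, ∑ b : Fin m, ∑ c : Fin m, ∑ d : Fin m,
          P z (φ a) * Cinv a b * P (φ c) (P (φ b) x) * Cinv c d * P (φ d) y := by
    rw [E8]
    refine sum4_reindex
      (fun a b c d => P y (φ a) * Cinv a b * P z (φ c) * Cinv c d * P (φ b) (P (φ d) x))
      (fun a b c d => P z (φ a) * Cinv a b * P (φ c) (P (φ b) x) * Cinv c d * P (φ d) y)
      (fun p => (p.2.2.1, p.2.2.2, p.2.1, p.1))
      (fun p => (p.2.2.2, p.2.2.1, p.1, p.2.1))
      (fun p => rfl) (fun p => rfl) ?_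
    rintro ⟨a, b, c, d⟩
    show P y (φ a) * Cinv a b * P z (φ c) * Cinv c d * P (φ b) (P (φ d) x)
      = P z (φ c) * Cinv c d * P (φ b) (P (φ d) x) * Cinv b a * P (φ a) y
    rw [hanti y (φ a), cinv_anti P φ Cinv hanti hCinv₁ a b]
    ring
  rw [h3, h6, h8]
  ring


lemma sum6_reindex (F G : Fin m → Fin m → Fin m → Fin m → Fin m → Fin m → A)
    (σ τ : (Fin m × Fin m × Fin m × Fin m × Fin m × Fin m) →
      (Fin m × Fin m × Fin m × Fin m × Fin m × Fin m))
    (h1 : ∀ p, τ (σ p) = p) (h2 : ∀ p, σ (τ p) = p)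
    (h : ∀ p : Fin m × Fin m × Fin m × Fin m × Fin m × Fin m,
      F p.1 p.2.1 p.2.2.1 p.2.2.2.1 p.2.2.2.2.1 p.2.2.2.2.2
        = G (σ p).1 (σ p).2.1 (σ p).2.2.1 (σ p).2.2.2.1 (σ p).2.2.2.2.1 (σ p).2.2.2.2.2) :
    (∑ a : Fin m, ∑ b : Fin m, ∑ c : Fin m, ∑ d : Fin m, ∑ e : Fin m, ∑ k : Fin m, F a b c d e k)
    = ∑ a : Fin m, ∑ b : Fin m, ∑ c : Fin m, ∑ d : Fin m, ∑ e : Fin m, ∑ k : Fin m,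
        G a b c d e k := by
  have e1 : (∑ p : Fin m × Fin m × Fin m × Fin m × Fin m × Fin m,
        F p.1 p.2.1 p.2.2.1 p.2.2.2.1 p.2.2.2.2.1 p.2.2.2.2.2)
      = ∑ a : Fin m, ∑ b : Fin m, ∑ c : Fin m, ∑ d : Fin m, ∑ e : Fin m, ∑ k : Fin m,
          F a b c d e k := by
    simp only [Fintype.sum_prod_type]
  have e2 : (∑ p : Fin m × Fin m × Fin m × Fin m × Fin m × Fin m,
        G p.1 p.2.1 p.2.2.1 p.2.2.2.1 p.2.2.2.2.1 p.2.2.2.2.2)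
      = ∑ a : Fin m, ∑ b : Fin m, ∑ c : Fin m, ∑ d : Fin m, ∑ e : Fin m, ∑ k : Fin m,
          G a b c d e k := by
    simp only [Fintype.sum_prod_type]
  rw [← e1, ← e2]
  exact Fintype.sum_equiv ⟨σ, τ, h1, h2⟩ _ _ h

lemma group4 (hanti : ∀ f g : A, P f g = - P g f)
    (hjacobi : ∀ f g h : A, P f (P g h) + P g (P h f) + P h (P f g) = 0)
    (hCinv₁ : ∀ a c : Fin m, (∑ b : Fin m, P (φ a) (φ b) * Cinv b c) = if a = c then 1 else 0)
    (f g h : A) :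
    E7 P φ Cinv f g h + E7 P φ Cinv g h f + E7 P φ Cinv h f g = 0 := by
  have h71 : E7 P φ Cinv f g h
      = ∑ a : Fin m, ∑ x : Fin m, ∑ b : Fin m, ∑ y : Fin m, ∑ c : Fin m, ∑ z : Fin m,
          P f (φ a) * Cinv a x * P g (φ b) * Cinv b y * P h (φ c) * Cinv c z
            * P (φ x) (P (φ y) (φ z)) := by
    rw [E7]
    refine sum6_reindex
      (fun a b c d e k => P f (φ a) * Cinv a b * P g (φ c) * Cinv c e
        * P (φ b) (P (φ e) (φ k)) * Cinv k d * P (φ d) h)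
      (fun a x b y c z => P f (φ a) * Cinv a x * P g (φ b) * Cinv b y * P h (φ c) * Cinv c z
        * P (φ x) (P (φ y) (φ z)))
      (fun p => (p.1, p.2.1, p.2.2.1, p.2.2.2.2.1, p.2.2.2.1, p.2.2.2.2.2))
      (fun p => (p.1, p.2.1, p.2.2.1, p.2.2.2.2.1, p.2.2.2.1, p.2.2.2.2.2))
      (fun p => rfl) (fun p => rfl) ?_
    rintro ⟨a, b, c, d, e, k⟩
    show P f (φ a) * Cinv a b * P g (φ c) * Cinv c e * P (φ b) (P (φ e) (φ k)) * Cinv k d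
        * P (φ d) h
      = P f (φ a) * Cinv a b * P g (φ c) * Cinv c e * P h (φ d) * Cinv d k
        * P (φ b) (P (φ e) (φ k))
    rw [cinv_anti P φ Cinv hanti hCinv₁ k d, hanti (φ d) h]
    ring
  have h72 : E7 P φ Cinv g h f
      = ∑ a : Fin m, ∑ x : Fin m, ∑ b : Fin m, ∑ y : Fin m, ∑ c : Fin m, ∑ z : Fin m,
          P f (φ a) * Cinv a x * P g (φ b) * Cinv b y * P h (φ c) * Cinv c z
            * P (φ y) (P (φ z) (φ x)) := by
    rw [E7]
    refine sum6_reindex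
      (fun a b c d e k => P g (φ a) * Cinv a b * P h (φ c) * Cinv c e
        * P (φ b) (P (φ e) (φ k)) * Cinv k d * P (φ d) f)
      (fun a x b y c z => P f (φ a) * Cinv a x * P g (φ b) * Cinv b y * P h (φ c) * Cinv c z
        * P (φ y) (P (φ z) (φ x)))
      (fun p => (p.2.2.2.1, p.2.2.2.2.2, p.1, p.2.1, p.2.2.1, p.2.2.2.2.1))
      (fun p => (p.2.2.1, p.2.2.2.1, p.2.2.2.2.1, p.1, p.2.2.2.2.2, p.2.1))
      (fun p => rfl) (fun p => rfl) ?_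
    rintro ⟨a, b, c, d, e, k⟩
    show P g (φ a) * Cinv a b * P h (φ c) * Cinv c e * P (φ b) (P (φ e) (φ k)) * Cinv k d
        * P (φ d) f
      = P f (φ d) * Cinv d k * P g (φ a) * Cinv a b * P h (φ c) * Cinv c e
        * P (φ b) (P (φ e) (φ k))
    rw [cinv_anti P φ Cinv hanti hCinv₁ k d, hanti (φ d) f]
    ring
  have h73 : E7 P φ Cinv h f g
      = ∑ a : Fin m, ∑ x : Fin m, ∑ b : Fin m, ∑ y : Fin m, ∑ c : Fin m, ∑ z : Fin m,
          P f (φ a) * Cinv a x * P g (φ b) * Cinv b y * P h (φ c) * Cinv c z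
            * P (φ z) (P (φ x) (φ y)) := by
    rw [E7]
    refine sum6_reindex
      (fun a b c d e k => P h (φ a) * Cinv a b * P f (φ c) * Cinv c e
        * P (φ b) (P (φ e) (φ k)) * Cinv k d * P (φ d) g)
      (fun a x b y c z => P f (φ a) * Cinv a x * P g (φ b) * Cinv b y * P h (φ c) * Cinv c z
        * P (φ z) (P (φ x) (φ y)))
      (fun p => (p.2.2.1, p.2.2.2.2.1, p.2.2.2.1, p.2.2.2.2.2, p.1, p.2.1))
      (fun p => (p.2.2.2.2.1, p.2.2.2.2.2, p.1, p.2.2.1, p.2.1, p.2.2.2.1))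
      (fun p => rfl) (fun p => rfl) ?_
    rintro ⟨a, b, c, d, e, k⟩
    show P h (φ a) * Cinv a b * P f (φ c) * Cinv c e * P (φ b) (P (φ e) (φ k)) * Cinv k d
        * P (φ d) g
      = P f (φ c) * Cinv c e * P g (φ d) * Cinv d k * P h (φ a) * Cinv a b
        * P (φ b) (P (φ e) (φ k))
    rw [cinv_anti P φ Cinv hanti hCinv₁ k d, hanti (φ d) g]
    ring
  rw [h71, h72, h73]
  simp only [← Finset.sum_add_distrib]
  refine Finset.sum_eq_zero fun a _ => Finset.sum_eq_zero fun x _ =>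
    Finset.sum_eq_zero fun b _ => Finset.sum_eq_zero fun y _ =>
    Finset.sum_eq_zero fun c _ => Finset.sum_eq_zero fun z _ => ?_
  linear_combination (P f (φ a) * Cinv a x * P g (φ b) * Cinv b y * P h (φ c) * Cinv c z) *
    hjacobi (φ x) (φ y) (φ z)


end DiracJacobiAux

/-- The Dirac bracket satisfies the Jacobi identity: `{f,{g,h}_D}_D + {g,{h,f}_D}_D + {h,{f,g}_D}_D = 0` for all `f, g, h ∈ A`; hence the Dirac bracket is again a Poisson bracket on `A`. -/
theorem dirac_bracket_jacobi {A : Type*} [CommRing A] [Algebra ℝ A]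
    (P : A →ₗ[ℝ] A →ₗ[ℝ] A)
    (hanti : ∀ f g : A, P f g = - P g f)
    (hjacobi : ∀ f g h : A, P f (P g h) + P g (P h f) + P h (P f g) = 0)
    (hleibniz : ∀ f g h : A, P f (g * h) = P f g * h + g * P f h)
    {m : ℕ} (φ : Fin m → A) (Cinv : Matrix (Fin m) (Fin m) A)
    (hCinv₁ : ∀ a c : Fin m, (∑ b : Fin m, P (φ a) (φ b) * Cinv b c) = if a = c then 1 else 0)
    (hCinv₂ : ∀ a c : Fin m, (∑ b : Fin m, Cinv a b * P (φ b) (φ c)) = if a = c then 1 else 0) :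
    ∀ f g h : A,
      diracBracket P φ Cinv f (diracBracket P φ Cinv g h) +
        diracBracket P φ Cinv g (diracBracket P φ Cinv h f) +
          diracBracket P φ Cinv h (diracBracket P φ Cinv f g) = 0 := by
  intro f g h
  rw [DiracJacobiAux.expandD P φ Cinv hleibniz hCinv₁ hCinv₂ f g h,
    DiracJacobiAux.expandD P φ Cinv hleibniz hCinv₁ hCinv₂ g h f,
    DiracJacobiAux.expandD P φ Cinv hleibniz hCinv₁ hCinv₂ h f g]
  linear_combination hjacobi f g h
    - DiracJacobiAux.group2 P φ Cinv hanti hjacobi hCinv₁ f g h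
    + DiracJacobiAux.group3 P φ Cinv hanti hjacobi hCinv₁ f g h
    + DiracJacobiAux.group3 P φ Cinv hanti hjacobi hCinv₁ g h f
    + DiracJacobiAux.group3 P φ Cinv hanti hjacobi hCinv₁ h f g
    - DiracJacobiAux.group4 P φ Cinv hanti hjacobi hCinv₁ f g h
end

section
/- Let Π : V* → V be skew and W ⊆ V a subspace such that Π(W°) ∩ W = {0} and Π(W°) + W = V. Then for every ξ ∈ V* there exists a unique c ∈ W° such that Π(ξ − c) ∈ W. -/
/-- Let `Pi : V* → V` be skew and `W ⊆ V` a subspace such that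
`Pi(W°) ∩ W = {0}` and `Pi(W°) + W = V`. Then for every `ξ ∈ V*` there exists a unique
`c ∈ W°` such that `Pi(ξ − c) ∈ W`. -/
theorem exists_unique_constraint_correction
    {V : Type*} [AddCommGroup V] [Module ℝ V] [FiniteDimensional ℝ V]
    (Pi : Module.Dual ℝ V →ₗ[ℝ] V)
    (hskew : ∀ ξ η : Module.Dual ℝ V, ξ (Pi η) = - η (Pi ξ))
    (W : Submodule ℝ V)
    (h1 : W.dualAnnihilator.map Pi ⊓ W = ⊥)
    (h2 : W.dualAnnihilator.map Pi ⊔ W = ⊤) :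
    ∀ ξ : Module.Dual ℝ V, ∃! c : Module.Dual ℝ V,
      c ∈ W.dualAnnihilator ∧ Pi (ξ - c) ∈ W := by
  intro ξ
  -- existence: decompose Pi ξ
  have hmem : Pi ξ ∈ W.dualAnnihilator.map Pi ⊔ W := by rw [h2]; trivial
  obtain ⟨y, hy, z, hz, hyz⟩ := Submodule.mem_sup.mp hmem
  obtain ⟨c, hc, hcy⟩ := hy
  have hcW : Pi (ξ - c) ∈ W := by
    rw [map_sub, hcy]
    have : Pi ξ - y = z := by rw [← hyz]; abel
    rw [this]; exact hz
  refine ⟨c, ⟨hc, hcW⟩, ?_⟩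
  rintro c' ⟨hc', hw'⟩
  -- uniqueness: d := c' - c annihilates both W and Pi(W°), hence all of V
  have hd : c' - c ∈ W.dualAnnihilator := Submodule.sub_mem _ hc' hc
  have hPiW : Pi (c' - c) ∈ W := by
    have heq : Pi (c' - c) = Pi (ξ - c) - Pi (ξ - c') := by
      rw [← map_sub]; congr 1; abel
    rw [heq]
    exact Submodule.sub_mem _ hcW hw'
  have hPimap : Pi (c' - c) ∈ W.dualAnnihilator.map Pi := ⟨c' - c, hd, rfl⟩
  have hPi0 : Pi (c' - c) = 0 := by
    have := h1 ▸ Submodule.mem_inf.mpr ⟨hPimap, hPiW⟩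
    simpa using this
  have hzero : c' - c = 0 := by
    ext v
    have hv : v ∈ W.dualAnnihilator.map Pi ⊔ W := by rw [h2]; trivial
    obtain ⟨a, ha, b, hb, hab⟩ := Submodule.mem_sup.mp hv
    obtain ⟨e, he, hea⟩ := ha
    have h1' : (c' - c) a = 0 := by
      rw [← hea, hskew (c' - c) e, hPi0]
      simp
    have h2' : (c' - c) b = 0 := (Submodule.mem_dualAnnihilator _).mp hd b hb
    rw [← hab]
    simp [map_add, h1', h2']
  exact sub_eq_zero.mp hzero
end

section
/- Let S ⊆ E be an isotropic involutive submodule and D ⊆ E an involutive submodule of a Courant–Dorfman algebra, and set D^S := (D ∩ S^⊥) + S. If e₁, e₂ ∈ D^S are both S-invariant, then [e₁,e₂] ∈ D^S and [e₁,e₂] is S-invariant. In other words, the set of S-invariant elements of D^S is closed under the bracket. -/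
/-- A Courant–Dorfman algebra: the algebraic model of the sections of a Courant
algebroid. `R` plays the role of `C^∞(M)`, `E` the role of the sections of the bundle,
`bracket` is the (Dorfman) bracket, `pair` the symmetric pairing, `anchor` the anchor map
into the ℝ-derivations of `R`, and `Dop` the map `𝒟 = ½ π* d`. -/
structure CourantDorfman (R : Type*) (E : Type*) [CommRing R] [Algebra ℝ R]
    [AddCommGroup E] [Module R E] [Module ℝ E] [IsScalarTower ℝ R E] where
  bracket : E → E → E
  pair : E →ₗ[R] E →ₗ[R] R
  anchor : E →ₗ[R] Derivation ℝ R R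
  Dop : R →ₗ[ℝ] E
  pair_symm : ∀ e₁ e₂ : E, pair e₁ e₂ = pair e₂ e₁
  bracket_add_left : ∀ e₁ e₂ e₃ : E, bracket (e₁ + e₂) e₃ = bracket e₁ e₃ + bracket e₂ e₃
  bracket_add_right : ∀ e₁ e₂ e₃ : E, bracket e₁ (e₂ + e₃) = bracket e₁ e₂ + bracket e₁ e₃
  bracket_smul_left : ∀ (r : ℝ) (e₁ e₂ : E), bracket (r • e₁) e₂ = r • bracket e₁ e₂
  bracket_smul_right : ∀ (r : ℝ) (e₁ e₂ : E), bracket e₁ (r • e₂) = r • bracket e₁ e₂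
  jacobi : ∀ e₁ e₂ e₃ : E,
    bracket e₁ (bracket e₂ e₃) = bracket (bracket e₁ e₂) e₃ + bracket e₂ (bracket e₁ e₃)
  anchor_bracket : ∀ e₁ e₂ : E, anchor (bracket e₁ e₂) = ⁅anchor e₁, anchor e₂⁆
  leibniz : ∀ (e₁ : E) (f : R) (e₂ : E),
    bracket e₁ (f • e₂) = f • bracket e₁ e₂ + (anchor e₁ f) • e₂
  anchor_pair : ∀ e₁ e₂ e₃ : E,
    anchor e₁ (pair e₂ e₃) = pair (bracket e₁ e₂) e₃ + pair e₂ (bracket e₁ e₃)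
  bracket_self : ∀ e : E, bracket e e = Dop (pair e e)
  pair_Dop : ∀ (f : R) (e : E), pair (Dop f) e = (1 / 2 : ℝ) • (anchor e f)

/-- The orthogonal of a submodule `A ⊆ E` with respect to the pairing of a
Courant–Dorfman algebra: `A^⊥ := {e ∈ E : ⟨e, a⟩ = 0 for all a ∈ A}`. -/
def CourantDorfman.perp {R : Type*} {E : Type*} [CommRing R] [Algebra ℝ R]
    [AddCommGroup E] [Module R E] [Module ℝ E] [IsScalarTower ℝ R E]
    (C : CourantDorfman R E) (A : Submodule R E) : Submodule R E where
  carrier := {e | ∀ a ∈ A, C.pair e a = 0}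
  add_mem' := by
    intro x y hx hy a ha
    simp only [Set.mem_setOf_eq] at *
    rw [map_add, LinearMap.add_apply, hx a ha, hy a ha, add_zero]
  zero_mem' := by
    intro a ha
    simp
  smul_mem' := by
    intro c x hx a ha
    simp only [Set.mem_setOf_eq] at *
    rw [map_smul, LinearMap.smul_apply, hx a ha, smul_zero]

/-- Let `S ⊆ E` be an isotropic involutive submodule and `D ⊆ E` an
involutive submodule of a Courant–Dorfman algebra, and set `D^S := (D ∩ S^⊥) + S`.
If `e₁, e₂ ∈ D^S` are both `S`-invariant, then `[e₁,e₂] ∈ D^S` and `[e₁,e₂]` is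
`S`-invariant: the set of `S`-invariant elements of `D^S` is closed under the bracket. -/
theorem stretching_invariant_sections_closed
    {R : Type*} {E : Type*} [CommRing R] [Algebra ℝ R]
    [AddCommGroup E] [Module R E] [Module ℝ E] [IsScalarTower ℝ R E]
    (C : CourantDorfman R E) (S D : Submodule R E)
    (hSiso : S ≤ C.perp S)
    (hSinv : ∀ a ∈ S, ∀ b ∈ S, C.bracket a b ∈ S)
    (hDinv : ∀ a ∈ D, ∀ b ∈ D, C.bracket a b ∈ D)
    (e₁ e₂ : E)
    (he₁ : e₁ ∈ (D ⊓ C.perp S) ⊔ S)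
    (he₂ : e₂ ∈ (D ⊓ C.perp S) ⊔ S)
    (hinv₁ : ∀ s ∈ S, C.bracket s e₁ ∈ S)
    (hinv₂ : ∀ s ∈ S, C.bracket s e₂ ∈ S) :
    C.bracket e₁ e₂ ∈ (D ⊓ C.perp S) ⊔ S ∧
      ∀ s ∈ S, C.bracket s (C.bracket e₁ e₂) ∈ S := by
  have hperp : (D ⊓ C.perp S) ⊔ S ≤ C.perp S := sup_le inf_le_right hSiso
  -- For e in the stretching and s ∈ S, [e,s] = -[s,e]
  have key : ∀ e ∈ (D ⊓ C.perp S) ⊔ S, ∀ s ∈ S, C.bracket e s = - C.bracket s e := by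
    intro e he s hs
    have h1 : C.pair e s = 0 := hperp he s hs
    have h2 : C.pair s e = 0 := by rw [C.pair_symm]; exact h1
    have h3 := C.bracket_self (e + s)
    rw [C.bracket_add_left, C.bracket_add_right, C.bracket_add_right] at h3
    simp only [map_add, LinearMap.add_apply, h1, h2, add_zero, zero_add,
      ← C.bracket_self] at h3
    have h4 : C.bracket e s + C.bracket s e = 0 := by
      linear_combination (norm := abel_nf) h3
    exact eq_neg_of_add_eq_zero_left h4
  -- [e₁, s] ∈ S and [e₂, s] ∈ S for s ∈ S
  have hinv₁' : ∀ s ∈ S, C.bracket e₁ s ∈ S := by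
    intro s hs
    rw [key e₁ he₁ s hs]
    exact neg_mem (hinv₁ s hs)
  have hinv₂' : ∀ s ∈ S, C.bracket e₂ s ∈ S := by
    intro s hs
    rw [key e₂ he₂ s hs]
    exact neg_mem (hinv₂ s hs)
  -- decompose e₁, e₂
  obtain ⟨d₁, hd₁, s₁, hs₁, he₁'⟩ := Submodule.mem_sup.mp he₁
  obtain ⟨d₂, hd₂, s₂, hs₂, he₂'⟩ := Submodule.mem_sup.mp he₂
  -- [d₁, s] ∈ S for s ∈ S
  have hd₁S : ∀ s ∈ S, C.bracket d₁ s ∈ S := by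
    intro s hs
    have h5 : C.bracket e₁ s = C.bracket d₁ s + C.bracket s₁ s := by
      rw [← he₁', C.bracket_add_left]
    have h6 : C.bracket d₁ s = C.bracket e₁ s - C.bracket s₁ s := by
      rw [h5]; abel
    rw [h6]
    exact sub_mem (hinv₁' s hs) (hSinv s₁ hs₁ s hs)
  -- [d₁, s₂] ∈ S
  have hd₁s₂ : C.bracket d₁ s₂ ∈ S := hd₁S s₂ hs₂
  -- [d₁, d₂] ∈ D ⊓ perp S
  have hdd : C.bracket d₁ d₂ ∈ D ⊓ C.perp S := by
    refine ⟨hDinv d₁ hd₁.1 d₂ hd₂.1, ?_⟩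
    intro s hs
    have h7 := C.anchor_pair d₁ d₂ s
    have h8 : C.pair d₂ s = 0 := hd₂.2 s hs
    have h9 : C.pair d₂ (C.bracket d₁ s) = 0 := hd₂.2 _ (hd₁S s hs)
    rw [h8, map_zero, h9, add_zero] at h7
    exact h7.symm
  constructor
  · -- membership in the stretching
    have hsplit : C.bracket e₁ e₂ =
        C.bracket d₁ d₂ + (C.bracket d₁ s₂ + C.bracket s₁ e₂) := by
      rw [← he₁', ← he₂', C.bracket_add_left, C.bracket_add_right, he₂']
      abel
    rw [hsplit]
    refine add_mem (Submodule.mem_sup_left hdd) (Submodule.mem_sup_right ?_)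
    exact add_mem hd₁s₂ (hinv₂ s₁ hs₁)
  · -- invariance
    intro s hs
    rw [C.jacobi]
    refine add_mem (hinv₂ _ (hinv₁ s hs)) (hinv₁' _ (hinv₂ s hs))
end

section
/- Let S and D be isotropic involutive submodules of a Courant–Dorfman algebra, and set D^S := (D ∩ S^⊥) + S. If every element of D^S can be written as an R-linear combination of S-invariant elements of D^S, then D^S is involutive, i.e. [e₁,e₂] ∈ D^S for all e₁, e₂ ∈ D^S. -/
/-- Let `S` and `D` be isotropic involutive submodules of a
Courant–Dorfman algebra, and set `D^S := (D ∩ S^⊥) + S`. If every element of `D^S` is an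
`R`-linear combination of `S`-invariant elements of `D^S`, then `D^S` is involutive. -/
theorem stretching_involutive_of_spanned_by_invariants
    {R : Type*} {E : Type*} [CommRing R] [Algebra ℝ R]
    [AddCommGroup E] [Module R E] [Module ℝ E] [IsScalarTower ℝ R E]
    (C : CourantDorfman R E) (S D : Submodule R E)
    (hSiso : S ≤ C.perp S)
    (hSinv : ∀ a ∈ S, ∀ b ∈ S, C.bracket a b ∈ S)
    (hDiso : D ≤ C.perp D)
    (hDinv : ∀ a ∈ D, ∀ b ∈ D, C.bracket a b ∈ D)
    (hspan : ∀ e ∈ (D ⊓ C.perp S) ⊔ S,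
      e ∈ Submodule.span R
        {x : E | x ∈ (D ⊓ C.perp S) ⊔ S ∧ ∀ s ∈ S, C.bracket s x ∈ S}) :
    ∀ e₁ ∈ (D ⊓ C.perp S) ⊔ S, ∀ e₂ ∈ (D ⊓ C.perp S) ⊔ S,
      C.bracket e₁ e₂ ∈ (D ⊓ C.perp S) ⊔ S := by
  intro e₁ he₁ e₂ he₂
  -- bracket with zero
  have hzero_right : ∀ x : E, C.bracket x 0 = 0 := by
    intro x
    have h := C.bracket_add_right x 0 0
    rw [add_zero] at h
    exact (left_eq_add.mp h)
  have hzero_left : ∀ y : E, C.bracket 0 y = 0 := by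
    intro y
    have h := C.bracket_add_left 0 0 y
    rw [add_zero] at h
    exact (left_eq_add.mp h)
  -- skew symmetry under vanishing pairings
  have skew : ∀ a b : E, C.pair a a = 0 → C.pair b b = 0 → C.pair a b = 0 →
      C.bracket a b = - C.bracket b a := by
    intro a b ha hb hab
    have hba : C.pair b a = 0 := by rw [C.pair_symm]; exact hab
    have hp : C.pair (a + b) (a + b) = 0 := by
      simp [map_add, LinearMap.add_apply, ha, hb, hab, hba]
    have h := C.bracket_self (a + b)
    rw [hp, map_zero, C.bracket_add_left, C.bracket_add_right, C.bracket_add_right,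
        C.bracket_self a, C.bracket_self b, ha, hb, map_zero] at h
    have h2 : C.bracket a b + C.bracket b a = 0 := by simpa using h
    exact eq_neg_of_add_eq_zero_left h2
  -- D^S is isotropic
  have hiso : ∀ a ∈ (D ⊓ C.perp S) ⊔ S, ∀ b ∈ (D ⊓ C.perp S) ⊔ S, C.pair a b = 0 := by
    intro a ha b hb
    obtain ⟨d₁, hd₁, s₁, hs₁, rfl⟩ := Submodule.mem_sup.mp ha
    obtain ⟨d₂, hd₂, s₂, hs₂, rfl⟩ := Submodule.mem_sup.mp hb
    obtain ⟨hd₁D, hd₁p⟩ := Submodule.mem_inf.mp hd₁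
    obtain ⟨hd₂D, hd₂p⟩ := Submodule.mem_inf.mp hd₂
    have h11 : C.pair d₁ d₂ = 0 := hDiso hd₁D d₂ hd₂D
    have h12 : C.pair d₁ s₂ = 0 := hd₁p s₂ hs₂
    have h21 : C.pair s₁ d₂ = 0 := by rw [C.pair_symm]; exact hd₂p s₁ hs₁
    have h22 : C.pair s₁ s₂ = 0 := hSiso hs₁ s₂ hs₂
    simp [map_add, LinearMap.add_apply, h11, h12, h21, h22]
  -- Step A: bracket of two S-invariant elements of D^S lies in D^S
  have stepA : ∀ x ∈ (D ⊓ C.perp S) ⊔ S, (∀ s ∈ S, C.bracket s x ∈ S) →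
      ∀ y ∈ (D ⊓ C.perp S) ⊔ S, (∀ s ∈ S, C.bracket s y ∈ S) →
      C.bracket x y ∈ (D ⊓ C.perp S) ⊔ S := by
    intro x hx hxi y hy hyi
    obtain ⟨dx, hdx, sx, hsx, rfl⟩ := Submodule.mem_sup.mp hx
    obtain ⟨dy, hdy, sy, hsy, rfl⟩ := Submodule.mem_sup.mp hy
    obtain ⟨hdxD, hdxp⟩ := Submodule.mem_inf.mp hdx
    obtain ⟨hdyD, hdyp⟩ := Submodule.mem_inf.mp hdy
    have hdxp' : ∀ s ∈ S, C.pair dx s = 0 := hdxp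
    have hdyp' : ∀ s ∈ S, C.pair dy s = 0 := hdyp
    have hsdx : ∀ s ∈ S, C.bracket s dx ∈ S := by
      intro s hs
      have h3 : C.bracket s dx = C.bracket s (dx + sx) - C.bracket s sx := by
        rw [C.bracket_add_right]; abel
      rw [h3]
      exact Submodule.sub_mem S (hxi s hs) (hSinv s hs sx hsx)
    have hsdy : ∀ s ∈ S, C.bracket s dy ∈ S := by
      intro s hs
      have h3 : C.bracket s dy = C.bracket s (dy + sy) - C.bracket s sy := by
        rw [C.bracket_add_right]; abel
      rw [h3]
      exact Submodule.sub_mem S (hyi s hs) (hSinv s hs sy hsy)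
    have hdxs : ∀ s ∈ S, C.bracket dx s ∈ S := by
      intro s hs
      have hsk : C.bracket dx s = - C.bracket s dx :=
        skew dx s (hDiso hdxD dx hdxD) (hSiso hs s hs) (hdxp' s hs)
      rw [hsk]
      exact Submodule.neg_mem S (hsdx s hs)
    have hdd : C.bracket dx dy ∈ D ⊓ C.perp S := by
      refine Submodule.mem_inf.mpr ⟨hDinv dx hdxD dy hdyD, ?_⟩
      intro s hs
      have hap := C.anchor_pair dx dy s
      rw [hdyp' s hs, map_zero] at hap
      have h1 : C.pair dy (C.bracket dx s) = 0 := hdyp' _ (hdxs s hs)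
      rw [h1, add_zero] at hap
      exact hap.symm
    have hSS : C.bracket dx sy + (C.bracket sx dy + C.bracket sx sy) ∈ S := by
      refine Submodule.add_mem S (hdxs sy hsy) (Submodule.add_mem S ?_ ?_)
      · exact hsdy sx hsx
      · exact hSinv sx hsx sy hsy
    have hexp : C.bracket (dx + sx) (dy + sy) =
        C.bracket dx dy + (C.bracket dx sy + (C.bracket sx dy + C.bracket sx sy)) := by
      rw [C.bracket_add_left, C.bracket_add_right, C.bracket_add_right]; abel
    rw [hexp]
    exact Submodule.add_mem _ (Submodule.mem_sup_left hdd) (Submodule.mem_sup_right hSS)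
  -- Step B: bracket of an S-invariant element with any element of D^S
  have stepB : ∀ x ∈ (D ⊓ C.perp S) ⊔ S, (∀ s ∈ S, C.bracket s x ∈ S) →
      ∀ y ∈ (D ⊓ C.perp S) ⊔ S, C.bracket x y ∈ (D ⊓ C.perp S) ⊔ S := by
    intro x hx hxi y hy
    have key : y ∈ (D ⊓ C.perp S) ⊔ S ∧ C.bracket x y ∈ (D ⊓ C.perp S) ⊔ S := by
      refine Submodule.span_induction ?_ ?_ ?_ ?_ (hspan y hy)
      · rintro z ⟨hz, hzi⟩
        exact ⟨hz, stepA x hx hxi z hz hzi⟩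
      · exact ⟨Submodule.zero_mem _, by rw [hzero_right]; exact Submodule.zero_mem _⟩
      · rintro a b _ _ ⟨ha1, ha2⟩ ⟨hb1, hb2⟩
        exact ⟨Submodule.add_mem _ ha1 hb1,
          by rw [C.bracket_add_right]; exact Submodule.add_mem _ ha2 hb2⟩
      · rintro r a _ ⟨ha1, ha2⟩
        refine ⟨Submodule.smul_mem _ r ha1, ?_⟩
        rw [C.leibniz]
        exact Submodule.add_mem _ (Submodule.smul_mem _ r ha2) (Submodule.smul_mem _ _ ha1)
    exact key.2
  -- Step C: general case by span induction on the first argument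
  have key : e₁ ∈ (D ⊓ C.perp S) ⊔ S ∧ C.bracket e₁ e₂ ∈ (D ⊓ C.perp S) ⊔ S := by
    refine Submodule.span_induction ?_ ?_ ?_ ?_ (hspan e₁ he₁)
    · rintro z ⟨hz, hzi⟩
      exact ⟨hz, stepB z hz hzi e₂ he₂⟩
    · exact ⟨Submodule.zero_mem _, by rw [hzero_left]; exact Submodule.zero_mem _⟩
    · rintro a b _ _ ⟨ha1, ha2⟩ ⟨hb1, hb2⟩
      exact ⟨Submodule.add_mem _ ha1 hb1,
        by rw [C.bracket_add_left]; exact Submodule.add_mem _ ha2 hb2⟩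
    · rintro r a _ ⟨ha1, ha2⟩
      refine ⟨Submodule.smul_mem _ r ha1, ?_⟩
      have hp2 : C.pair e₂ e₂ = 0 := hiso e₂ he₂ e₂ he₂
      have hra : r • a ∈ (D ⊓ C.perp S) ⊔ S := Submodule.smul_mem _ r ha1
      have h1 : C.bracket (r • a) e₂ = - C.bracket e₂ (r • a) :=
        skew _ _ (hiso _ hra _ hra) hp2 (hiso _ hra _ he₂)
      have h2 : C.bracket e₂ a = - C.bracket a e₂ :=
        skew _ _ hp2 (hiso a ha1 a ha1) (hiso _ he₂ _ ha1)
      rw [h1, C.leibniz, h2]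
      refine Submodule.neg_mem _ (Submodule.add_mem _ ?_ (Submodule.smul_mem _ _ ha1))
      exact Submodule.smul_mem _ r (Submodule.neg_mem _ ha2)
  exact key.2
end

section
/- Let S ⊆ E be an isotropic involutive submodule of a Courant–Dorfman algebra and D ⊆ E a submodule preserved by S, i.e. [s,d] ∈ D for all s ∈ S and d ∈ D. Then S also preserves the stretching D^S := (D ∩ S^⊥) + S, i.e. [s,e] ∈ D^S for all s ∈ S and e ∈ D^S. -/
/-- Let `S ⊆ E` be an isotropic involutive submodule of a Courant–Dorfman
algebra and `D ⊆ E` a submodule preserved by `S` (`[s,d] ∈ D` for all `s ∈ S`, `d ∈ D`).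
Then `S` also preserves the stretching `D^S := (D ∩ S^⊥) + S`. -/
theorem stretching_preserved_by_S
    {R : Type*} {E : Type*} [CommRing R] [Algebra ℝ R]
    [AddCommGroup E] [Module R E] [Module ℝ E] [IsScalarTower ℝ R E]
    (C : CourantDorfman R E) (S D : Submodule R E)
    (hSiso : S ≤ C.perp S)
    (hSinv : ∀ a ∈ S, ∀ b ∈ S, C.bracket a b ∈ S)
    (hpres : ∀ s ∈ S, ∀ d ∈ D, C.bracket s d ∈ D) :
    ∀ s ∈ S, ∀ e ∈ (D ⊓ C.perp S) ⊔ S, C.bracket s e ∈ (D ⊓ C.perp S) ⊔ S := by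
  intro s hs e he
  obtain ⟨x, hx, y, hy, rfl⟩ := Submodule.mem_sup.mp he
  rw [C.bracket_add_right]
  apply Submodule.add_mem
  · apply Submodule.mem_sup_left
    obtain ⟨hxD, hxP⟩ := hx
    refine ⟨hpres s hs x hxD, ?_⟩
    intro a ha
    have h := C.anchor_pair s x a
    rw [hxP a ha, map_zero, hxP _ (hSinv s hs a ha), add_zero] at h
    exact h.symm
  · exact Submodule.mem_sup_right (hSinv s hs y hy)
end
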